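/- For every real number r with 0 ≤ r < 1/4, the series ∑_{n≥0} C_n r^n is summable, where C_n denotes the n-th Catalan number. -/

import Mathlib

theorem catalan_le_centralBinom (n : ℕ) : catalan n ≤ n.centralBinom := by
  rw [catalan_eq_centralBinom_div]
  exact Nat.div_le_self _ _

theorem catalan_le_four_pow (n : ℕ) : catalan n ≤ 4 ^ n :=
  (catalan_le_centralBinom n).trans (Nat.centralBinom_le_four_pow n)

/-- for `0 ≤ r < 1/4`, the Catalan generating series `∑ C_n r^n` is summable. -/
theorem catalan_series_summable (r : ℝ) (hr : 0 ≤ r) (hr4 : r < 1 / 4) :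
    Summable (fun n : ℕ => (catalan n : ℝ) * r ^ n) := by
  have hgeom : Summable (fun n : ℕ => (4 * r) ^ n) :=
    summable_geometric_of_lt_one (by positivity) (by linarith)
  refine hgeom.of_nonneg_of_le (fun n => by positivity) (fun n => ?_)
  rw [mul_pow]
  gcongr
  exact_mod_cast catalan_le_four_pow n
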